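/- arXiv:2101.09011 — 8 statements merged into one kernel-verified Lean document; each statement's English description precedes it below -/
import Mathlib

section
/- Let H be a complex Hilbert space, let A and B be bounded linear operators on H that are normal (each commutes with its adjoint: A·A* = A*·A and B·B* = B*·B), and suppose there is c ∈ ℂ such that A·B* − B*·A = c·I, where I is the identity operator. Let φ ∈ H be a unit vector and put m_A := ⟨φ, Aφ⟩, m_B := ⟨φ, Bφ⟩. Then the fluctuation norms satisfy the Heisenberg-type relation ‖(A − m_A·I)φ‖² · ‖(B − m_B·I)φ‖² ≥ |c|²/4. (Applied with c = −2i to the two-mode quadrature operators Q_T(μ;ψ) and Q_T(μ;ψ+π/2), this gives the uncertainty bound ⟨ΔQ_T(μ;ψ)†ΔQ_T(μ;ψ)⟩·⟨ΔQ_T(μ;ψ±π/2)†ΔQ_T(μ;ψ±π/2)⟩ ≥ 1 of the paper.) -/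
open scoped InnerProductSpace

/-!
Shifting `A` and `B` by scalars changes neither normality nor the commutator `[A, B*]`, so
`c = ⟪φ, (ΔA ΔB* - ΔB* ΔA) φ⟫ = ⟪ΔA* φ, ΔB* φ⟫ - ⟪ΔB φ, ΔA φ⟫` for the fluctuations
`ΔA, ΔB`. Cauchy–Schwarz bounds each term, and for the normal operators `ΔA, ΔB` the
norms `‖ΔA* φ‖, ‖ΔB* φ‖` equal `‖ΔA φ‖, ‖ΔB φ‖`; hence `|c| ≤ 2 ‖ΔA φ‖ ‖ΔB φ‖`.
-/

section Algebra

variable {𝕜 R : Type*} [CommRing 𝕜] [Ring R] [Algebra 𝕜 R]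

theorem sub_smul_one_mul_sub_sub_mul (x y : R) (a b : 𝕜) :
    (x - a • 1) * (y - b • 1) - (y - b • 1) * (x - a • 1) = x * y - y * x := by
  simp only [sub_mul, mul_sub, smul_mul_assoc, mul_smul_comm, one_mul, mul_one]
  module

variable [StarRing 𝕜] [StarRing R] [StarModule 𝕜 R]

theorem IsStarNormal.sub_smul_one (x : R) [IsStarNormal x] (m : 𝕜) :
    IsStarNormal (x - m • 1) :=
  Commute.isStarNormal_sub <| by
    rw [star_smul, star_one]
    exact (Commute.one_right x).smul_right _

end Algebra

namespace ContinuousLinearMap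

variable {𝕜 E : Type*} [RCLike 𝕜] [NormedAddCommGroup E] [InnerProductSpace 𝕜 E]
  [CompleteSpace E]

theorem norm_star_apply (X : E →L[𝕜] E) [IsStarNormal X] (φ : E) : ‖star X φ‖ = ‖X φ‖ := by
  rw [star_eq_adjoint]
  exact (isStarNormal_iff_norm_eq_adjoint.mp ‹_› φ).symm

theorem inner_mul_star_sub_star_mul_apply (X Y : E →L[𝕜] E) (φ : E) :
    ⟪φ, (X * star Y - star Y * X) φ⟫_𝕜 = ⟪star X φ, star Y φ⟫_𝕜 - ⟪Y φ, X φ⟫_𝕜 := by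
  rw [sub_apply, inner_sub_right, mul_apply_eq_comp, mul_apply_eq_comp, star_eq_adjoint,
    star_eq_adjoint, adjoint_inner_left, adjoint_inner_right]

theorem norm_inner_mul_star_sub_star_mul_apply_le (X Y : E →L[𝕜] E) [IsStarNormal X]
    [IsStarNormal Y] (φ : E) :
    ‖⟪φ, (X * star Y - star Y * X) φ⟫_𝕜‖ ≤ 2 * (‖X φ‖ * ‖Y φ‖) := by
  calc ‖⟪φ, (X * star Y - star Y * X) φ⟫_𝕜‖
      = ‖⟪star X φ, star Y φ⟫_𝕜 - ⟪Y φ, X φ⟫_𝕜‖ := by rw [inner_mul_star_sub_star_mul_apply]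
    _ ≤ ‖star X φ‖ * ‖star Y φ‖ + ‖Y φ‖ * ‖X φ‖ :=
        (norm_sub_le _ _).trans (add_le_add (norm_inner_le_norm _ _) (norm_inner_le_norm _ _))
    _ = 2 * (‖X φ‖ * ‖Y φ‖) := by rw [norm_star_apply, norm_star_apply]; ring

end ContinuousLinearMap

/-- Heisenberg-type uncertainty relation for two normal bounded operators whose
commutator `[A, B*]` is a scalar `c`: the product of the variances of their
fluctuations in any unit vector state is at least `|c|²/4`. -/
theorem heisenberg_relation_normal_operators
    {H : Type*} [NormedAddCommGroup H] [InnerProductSpace ℂ H] [CompleteSpace H]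
    (A B : H →L[ℂ] H) (c : ℂ)
    (hA : A * star A = star A * A) (hB : B * star B = star B * B)
    (hcomm : A * star B - star B * A = c • (1 : H →L[ℂ] H))
    (φ : H) (hφ : ‖φ‖ = 1) :
    ‖(A - (⟪φ, A φ⟫_ℂ) • (1 : H →L[ℂ] H)) φ‖ ^ 2 *
      ‖(B - (⟪φ, B φ⟫_ℂ) • (1 : H →L[ℂ] H)) φ‖ ^ 2 ≥ ‖c‖ ^ 2 / 4 := by
  set ΔA := A - ⟪φ, A φ⟫_ℂ • (1 : H →L[ℂ] H)
  set ΔB := B - ⟪φ, B φ⟫_ℂ • (1 : H →L[ℂ] H)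
  have : IsStarNormal ΔA := have : IsStarNormal A := ⟨hA.symm⟩; .sub_smul_one A _
  have : IsStarNormal ΔB := have : IsStarNormal B := ⟨hB.symm⟩; .sub_smul_one B _
  have hΔcomm : ΔA * star ΔB - star ΔB * ΔA = c • 1 := by
    rw [star_sub, star_smul, star_one, sub_smul_one_mul_sub_sub_mul, hcomm]
  have hc : ‖c‖ ≤ 2 * (‖ΔA φ‖ * ‖ΔB φ‖) := by
    calc ‖c‖ = ‖⟪φ, (ΔA * star ΔB - star ΔB * ΔA) φ⟫_ℂ‖ := by
          rw [hΔcomm, smul_apply, one_apply_eq_self, inner_smul_right,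
            inner_self_eq_norm_sq_to_K, hφ]
          simp
      _ ≤ 2 * (‖ΔA φ‖ * ‖ΔB φ‖) :=
          ContinuousLinearMap.norm_inner_mul_star_sub_star_mul_apply_le ΔA ΔB φ
  nlinarith [norm_nonneg c]
end

section
/- Let γ, Ω be real with 0 < γ/2 < Ω, set ω := √(Ω² − γ²/4), let v ∈ ℝ, and define h(t) := (v²Ω/(2ω))·e^{−γt/2}·sin(ωt) for t ≥ 0. Then for every s ≥ 0, ∫₀^∞ 4·h(u)·h(s+u) du = (v⁴/(4γω))·e^{−γs/2}·(2ω·cos(ωs) + γ·sin(ωs)). Equivalently, with τ := (ω − iγ/2)/Ω, this equals (v⁴Ω/(4γω))·(τ·e^{(iω−γ/2)s} + conj(τ)·e^{(−iω−γ/2)s}). -/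
/-!
Product-to-sum turns `4 h(u) h(s+u)` into `e^{-γu}` times a difference of two cosines
`cos(b u + ω s)` with `b = 0` and `b = 2ω`, and each such damped cosine integrates over `(0, ∞)`
to `Re (e^{iφ} / (γ - i b))`. The `τ`-form is `2 Re (τ e^{(iω - γ/2)s})` written out.
-/

open Real MeasureTheory Set

noncomputable def dampedSine (A γ ω t : ℝ) : ℝ := A * exp (-γ * t / 2) * sin (ω * t)

theorem exp_neg_mul_mul_cos_add_eq_re (a b φ u : ℝ) :
    exp (-(a * u)) * cos (b * u + φ) =
      (Complex.exp (φ * Complex.I) * Complex.exp ((-a + b * Complex.I) * u)).re := by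
  rw [← Complex.exp_add, Complex.exp_re]
  simp [add_comm]

theorem integrableOn_exp_neg_mul_mul_cos_add {a : ℝ} (ha : 0 < a) (b φ : ℝ) :
    IntegrableOn (fun u => exp (-(a * u)) * cos (b * u + φ)) (Ioi 0) := by
  simp_rw [exp_neg_mul_mul_cos_add_eq_re]
  exact ((integrableOn_exp_mul_complex_Ioi (by simpa using ha) 0).const_mul _).re

theorem integral_exp_neg_mul_mul_cos_add {a : ℝ} (ha : 0 < a) (b φ : ℝ) :
    ∫ u in Ioi 0, exp (-(a * u)) * cos (b * u + φ) =
      (a * cos φ - b * sin φ) / (a ^ 2 + b ^ 2) := by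
  simp_rw [exp_neg_mul_mul_cos_add_eq_re, ← RCLike.re_to_complex]
  rw [integral_re, integral_const_mul, integral_exp_mul_complex_Ioi (by simpa using ha)]
  · simp [Complex.exp_mul_I, Complex.div_re, Complex.div_im, Complex.normSq_apply,
      Complex.cos_ofReal_re, Complex.sin_ofReal_re]
    ring
  · exact (integrableOn_exp_mul_complex_Ioi (by simpa using ha) 0).const_mul _

theorem four_mul_dampedSine_mul_dampedSine_add (A γ ω s u : ℝ) :
    4 * dampedSine A γ ω u * dampedSine A γ ω (s + u) =
      2 * A ^ 2 * exp (-γ * s / 2) *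
        (exp (-(γ * u)) * cos (0 * u + ω * s) - exp (-(γ * u)) * cos (2 * ω * u + ω * s)) := by
  have hexp : exp (-γ * u / 2) * exp (-γ * (s + u) / 2) = exp (-γ * s / 2) * exp (-(γ * u)) := by
    rw [← exp_add, ← exp_add]; ring_nf
  have hsin := two_mul_sin_mul_sin (ω * (s + u)) (ω * u)
  rw [show ω * (s + u) - ω * u = 0 * u + ω * s by ring,
    show ω * (s + u) + ω * u = 2 * ω * u + ω * s by ring] at hsin
  unfold dampedSine
  linear_combination (4 * A ^ 2 * sin (ω * u) * sin (ω * (s + u))) * hexp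
    + (2 * A ^ 2 * exp (-γ * s / 2) * exp (-(γ * u))) * hsin

theorem integral_dampedSine_mul_dampedSine_add {γ : ℝ} (hγ : 0 < γ) (A ω s : ℝ) :
    ∫ u in Ioi 0, 4 * dampedSine A γ ω u * dampedSine A γ ω (s + u) =
      4 * A ^ 2 * ω / (γ * (γ ^ 2 + 4 * ω ^ 2)) * exp (-γ * s / 2) *
        (2 * ω * cos (ω * s) + γ * sin (ω * s)) := by
  simp_rw [four_mul_dampedSine_mul_dampedSine_add]
  rw [integral_const_mul, integral_sub (integrableOn_exp_neg_mul_mul_cos_add hγ _ _)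
    (integrableOn_exp_neg_mul_mul_cos_add hγ _ _), integral_exp_neg_mul_mul_cos_add hγ,
    integral_exp_neg_mul_mul_cos_add hγ]
  field_simp
  ring

theorem ofReal_mul_add_conj_mul_exp (γ Ω ω s : ℝ) (hΩ : Ω ≠ 0) :
    (Ω : ℂ) * (((ω : ℂ) - Complex.I * γ / 2) / Ω * Complex.exp ((Complex.I * ω - γ / 2) * s)
      + (starRingEnd ℂ) (((ω : ℂ) - Complex.I * γ / 2) / Ω) *
          Complex.exp ((-Complex.I * ω - γ / 2) * s)) =
      ((exp (-γ * s / 2) * (2 * ω * cos (ω * s) + γ * sin (ω * s)) : ℝ) : ℂ) := by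
  have hΩc : (Ω : ℂ) ≠ 0 := Complex.ofReal_ne_zero.2 hΩ
  have hconj : (starRingEnd ℂ) (((ω : ℂ) - Complex.I * γ / 2) / Ω) =
      ((ω : ℂ) + Complex.I * γ / 2) / Ω := by
    simp [map_div₀, Complex.conj_ofReal, map_ofNat]
    ring
  have hexp_pos : Complex.exp ((Complex.I * ω - γ / 2) * s) =
      Complex.exp (-γ * s / 2) * (Complex.cos (ω * s) + Complex.sin (ω * s) * Complex.I) := by
    rw [← Complex.exp_mul_I, ← Complex.exp_add]; ring_nf
  have hexp_neg : Complex.exp ((-Complex.I * ω - γ / 2) * s) =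
      Complex.exp (-γ * s / 2) * (Complex.cos (ω * s) - Complex.sin (ω * s) * Complex.I) := by
    calc Complex.exp ((-Complex.I * ω - γ / 2) * s)
        = Complex.exp (-γ * s / 2) * Complex.exp (-(ω * s) * Complex.I) := by
          rw [← Complex.exp_add]; ring_nf
      _ = _ := by rw [Complex.exp_mul_I, Complex.cos_neg, Complex.sin_neg]; ring
  rw [hconj, hexp_pos, hexp_neg]
  simp only [mul_add, ← mul_assoc, mul_div_cancel₀ _ hΩc]
  push_cast
  linear_combination (-(γ : ℂ) * Complex.exp (-γ * s / 2) * Complex.sin (ω * s)) * Complex.I_sq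

theorem response_function_autocorrelation_general
    (γ Ω : ℝ) (hγ : 0 < γ) (hΩ : γ / 2 < Ω)
    (ω : ℝ) (hω : ω = Real.sqrt (Ω ^ 2 - γ ^ 2 / 4))
    (v : ℝ) (h : ℝ → ℝ)
    (hh : ∀ t, h t = (v ^ 2 * Ω / (2 * ω)) * Real.exp (-γ * t / 2) * Real.sin (ω * t))
    (τ : ℂ) (hτ : τ = ((ω : ℂ) - Complex.I * (γ : ℂ) / 2) / (Ω : ℂ))
    (s : ℝ) :
    (∫ u in Set.Ioi (0:ℝ), 4 * h u * h (s + u))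
      = (v ^ 4 / (4 * γ * ω)) * Real.exp (-γ * s / 2) *
          (2 * ω * Real.cos (ω * s) + γ * Real.sin (ω * s)) ∧
    ((∫ u in Set.Ioi (0:ℝ), 4 * h u * h (s + u) : ℝ) : ℂ)
      = ((v ^ 4 * Ω / (4 * γ * ω) : ℝ) : ℂ) *
          (τ * Complex.exp ((Complex.I * ω - γ / 2) * s)
            + (starRingEnd ℂ) τ * Complex.exp ((-Complex.I * ω - γ / 2) * s)) := by
  have hΩ0 : 0 < Ω := by linarith
  have hdisc : 0 < Ω ^ 2 - γ ^ 2 / 4 := by nlinarith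
  have hω0 : 0 < ω := hω ▸ Real.sqrt_pos.2 hdisc
  have hΩω : γ ^ 2 + 4 * ω ^ 2 = 4 * Ω ^ 2 := by rw [hω, Real.sq_sqrt hdisc.le]; ring
  have hcoef : 4 * (v ^ 2 * Ω / (2 * ω)) ^ 2 * ω / (γ * (4 * Ω ^ 2)) = v ^ 4 / (4 * γ * ω) := by
    field_simp
    ring
  obtain rfl : h = dampedSine (v ^ 2 * Ω / (2 * ω)) γ ω := funext hh
  have hreal := integral_dampedSine_mul_dampedSine_add hγ (v ^ 2 * Ω / (2 * ω)) ω s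
  rw [hΩω, hcoef] at hreal
  refine ⟨hreal, ?_⟩
  rw [hreal, hτ, show v ^ 4 * Ω / (4 * γ * ω) = v ^ 4 / (4 * γ * ω) * Ω by ring,
    Complex.ofReal_mul _ Ω, mul_assoc ((v ^ 4 / (4 * γ * ω) : ℝ) : ℂ),
    ofReal_mul_add_conj_mul_exp γ Ω ω s hΩ0.ne']
  push_cast
  ring

/-- Autocorrelation of the radiation-pressure response function
`h(t) = (v²Ω/(2ω))e^{−γt/2}sin(ωt)`:
`∫₀^∞ 4h(u)h(s+u)du = (v⁴/(4γω))e^{−γs/2}(2ω cos(ωs) + γ sin(ωs))`, which equals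
`(v⁴Ω/(4γω))(τe^{(iω−γ/2)s} + conj(τ)e^{(−iω−γ/2)s})` with `τ = (ω − iγ/2)/Ω`. -/
theorem response_function_autocorrelation
    (γ Ω : ℝ) (hγ : 0 < γ) (hΩ : γ / 2 < Ω)
    (ω : ℝ) (hω : ω = Real.sqrt (Ω ^ 2 - γ ^ 2 / 4))
    (v : ℝ) (h : ℝ → ℝ)
    (hh : ∀ t, h t = (v ^ 2 * Ω / (2 * ω)) * Real.exp (-γ * t / 2) * Real.sin (ω * t))
    (τ : ℂ) (hτ : τ = ((ω : ℂ) - Complex.I * (γ : ℂ) / 2) / (Ω : ℂ))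
    (s : ℝ) (hs : 0 ≤ s) :
    (∫ u in Set.Ioi (0:ℝ), 4 * h u * h (s + u))
      = (v ^ 4 / (4 * γ * ω)) * Real.exp (-γ * s / 2) *
          (2 * ω * Real.cos (ω * s) + γ * Real.sin (ω * s)) ∧
    ((∫ u in Set.Ioi (0:ℝ), 4 * h u * h (s + u) : ℝ) : ℂ)
      = ((v ^ 4 * Ω / (4 * γ * ω) : ℝ) : ℂ) *
          (τ * Complex.exp ((Complex.I * ω - γ / 2) * s)
            + (starRingEnd ℂ) τ * Complex.exp ((-Complex.I * ω - γ / 2) * s)) :=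
  response_function_autocorrelation_general γ Ω hγ hΩ ω hω v h hh τ hτ s
end

section
/- Let γ, Ω be real with 0 < γ/2 < Ω, set ω := √(Ω² − γ²/4), let v ∈ ℝ, and define h(t) := (v²Ω/(2ω))·e^{−γt/2}·sin(ωt) for t ≥ 0 and D(μ) := (γ²/4 + (μ+ω)²)·(γ²/4 + (μ−ω)²) for μ ∈ ℝ. Then for all α, μ ∈ ℝ, 2·Re ∫₀^∞ e^{iμt}·( e^{−iα}·2i·h(t) + e^{iα}·(−2i)·h(t) ) dt = 4·v²·Ω·(Ω² − μ²)·sin(α) / D(μ). (This is the linearized reduced spectrum Σ₀(μ), up to the prefactor η^{3/2}|λ|², in the regime of weak radiation-pressure interaction.) -/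
/-!
The two phase factors combine to `e^{-iα}·2i - e^{iα}·2i = 4 sin α`, so the integrand is
`4 sin α · h(t) · e^{iμt}`. Splitting `sin ωt` into exponentials, the Laplace transform
`∫₀^∞ e^{ct}·e^{±iωt} dt = -1/(c ± iω)` gives `∫₀^∞ e^{ct} sin ωt dt = ω/(c² + ω²)`; for
`c = -γ/2 + iμ` one has `c² + ω² = (Ω² - μ²) - iγμ`, whose squared modulus factors as `D(μ)`.
-/

open MeasureTheory Set Complex

theorem integral_exp_mul_mul_sin_Ioi {c : ℂ} (hc : c.re < 0) (ω : ℝ) :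
    ∫ t in Ioi (0 : ℝ), cexp (c * t) * sin (ω * t) = ω / (c ^ 2 + ω ^ 2) := by
  have hcp : (c + ω * I).re < 0 := by simpa using hc
  have hcm : (c - ω * I).re < 0 := by simpa using hc
  have hsplit : ∀ t : ℝ, cexp (c * t) * sin (ω * t)
      = (cexp ((c - ω * I) * t) - cexp ((c + ω * I) * t)) * (I / 2) := by
    intro t
    rw [sin, show (c - ω * I) * t = c * t + -(ω * t) * I by ring,
      show (c + ω * I) * t = c * t + ω * t * I by ring, Complex.exp_add, Complex.exp_add]
    ring
  simp_rw [hsplit]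
  rw [integral_mul_const, integral_sub (integrableOn_exp_mul_complex_Ioi hcm 0)
    (integrableOn_exp_mul_complex_Ioi hcp 0), integral_exp_mul_complex_Ioi hcm,
    integral_exp_mul_complex_Ioi hcp]
  have hp : c + ω * I ≠ 0 := fun h => by simp [h] at hcp
  have hm : c - ω * I ≠ 0 := fun h => by simp [h] at hcm
  have hprod : c ^ 2 + ω ^ 2 = (c + ω * I) * (c - ω * I) := by
    linear_combination (ω : ℂ) ^ 2 * I_sq
  simp only [ofReal_zero, mul_zero, Complex.exp_zero, hprod]
  field_simp
  linear_combination -2 * (ω : ℂ) * I_sq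

theorem re_integral_exp_I_mul_mul_exp_neg_mul_sin_Ioi {a : ℝ} (ha : 0 < a) (μ ω : ℝ) :
    (∫ t in Ioi (0 : ℝ), cexp (I * μ * t) * ((Real.exp (-a * t) * Real.sin (ω * t) : ℝ) : ℂ)).re
      = ω * (a ^ 2 + ω ^ 2 - μ ^ 2) / ((a ^ 2 + (μ + ω) ^ 2) * (a ^ 2 + (μ - ω) ^ 2)) := by
  have hc : (-a + μ * I).re < 0 := by simpa using ha
  have hintegrand : ∀ t : ℝ, cexp (I * μ * t) * ((Real.exp (-a * t) * Real.sin (ω * t) : ℝ) : ℂ)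
      = cexp ((-a + μ * I) * t) * sin (ω * t) := by
    intro t
    push_cast
    rw [← mul_assoc, ← Complex.exp_add]
    ring_nf
  simp_rw [hintegrand]
  have hdenom : (-a + μ * I) ^ 2 + ω ^ 2 = ((a ^ 2 + ω ^ 2 - μ ^ 2 : ℝ) : ℂ) + (-2 * a * μ : ℝ) * I := by
    push_cast
    linear_combination (μ : ℂ) ^ 2 * I_sq
  rw [integral_exp_mul_mul_sin_Ioi hc, hdenom, div_re, normSq_add_mul_I]
  simp only [ofReal_re, ofReal_im, add_re, add_im, mul_re, mul_im, I_re, I_im]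
  rw [show (a ^ 2 + ω ^ 2 - μ ^ 2) ^ 2 + (-2 * a * μ) ^ 2
      = (a ^ 2 + (μ + ω) ^ 2) * (a ^ 2 + (μ - ω) ^ 2) by ring]
  ring

/-- Linearized reduced spectrum `Σ₀(μ)` (up to the prefactor `η^{3/2}|λ|²`):
`2 Re ∫₀^∞ e^{iμt}(e^{−iα}·2ih(t) + e^{iα}·(−2i)h(t)) dt = 4v²Ω(Ω² − μ²) sin α / D(μ)`. -/
theorem linearized_sigma_zero_spectrum
    (γ Ω : ℝ) (hγ : 0 < γ) (hΩ : γ / 2 < Ω)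
    (ω : ℝ) (hω : ω = Real.sqrt (Ω ^ 2 - γ ^ 2 / 4))
    (v : ℝ) (h : ℝ → ℝ)
    (hh : ∀ t, h t = (v ^ 2 * Ω / (2 * ω)) * Real.exp (-γ * t / 2) * Real.sin (ω * t))
    (D : ℝ → ℝ) (hD : ∀ x, D x = (γ ^ 2 / 4 + (x + ω) ^ 2) * (γ ^ 2 / 4 + (x - ω) ^ 2))
    (α μ : ℝ) :
    2 * (∫ t in Set.Ioi (0:ℝ), Complex.exp (Complex.I * μ * t) *
          (Complex.exp (-Complex.I * α) * (2 * Complex.I) * (h t : ℂ)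
            + Complex.exp (Complex.I * α) * (-2 * Complex.I) * (h t : ℂ))).re
      = 4 * v ^ 2 * Ω * (Ω ^ 2 - μ ^ 2) * Real.sin α / D μ := by
  have hsq : γ ^ 2 / 4 < Ω ^ 2 := by nlinarith
  have hωpos : 0 < ω := hω ▸ Real.sqrt_pos.mpr (by linarith)
  have hω2 : ω ^ 2 = Ω ^ 2 - γ ^ 2 / 4 := hω ▸ Real.sq_sqrt (by linarith)
  have hphase : cexp (-I * α) * (2 * I) + cexp (I * α) * (-2 * I) = 4 * Real.sin α := by
    rw [ofReal_sin, sin]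
    ring_nf
  have hintegrand : ∀ t : ℝ, cexp (I * μ * t) *
      (cexp (-I * α) * (2 * I) * (h t : ℂ) + cexp (I * α) * (-2 * I) * (h t : ℂ))
      = ((4 * Real.sin α * (v ^ 2 * Ω / (2 * ω)) : ℝ) : ℂ) *
        (cexp (I * μ * t) * ((Real.exp (-(γ / 2) * t) * Real.sin (ω * t) : ℝ) : ℂ)) := by
    intro t
    rw [← add_mul, hphase, hh, show -(γ / 2) * t = -γ * t / 2 by ring]
    push_cast
    ring
  simp_rw [hintegrand]
  rw [integral_const_mul, re_ofReal_mul,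
    re_integral_exp_I_mul_mul_exp_neg_mul_sin_Ioi (half_pos hγ), hD,
    show (γ / 2) ^ 2 = γ ^ 2 / 4 by ring, show γ ^ 2 / 4 + ω ^ 2 = Ω ^ 2 by linarith]
  field_simp
end

section
/- Let γ, Ω be real with 0 < γ/2 < Ω, set ω := √(Ω² − γ²/4), let v ∈ ℝ, c ≥ 0, N ≥ 0, and define g(s) := (v²Ω/(2ω))·(2N+1)·e^{−γs/2}·cos(ωs), r(s) := (1/Ω)·e^{−γs/2}·(ω·cos(ωs) + (γ/2)·sin(ωs)), A := c·v⁴·Ω/(4γω), and D(μ) := (γ²/4 + (μ+ω)²)·(γ²/4 + (μ−ω)²). Then for every μ ∈ ℝ, 2c·∫₀^∞ cos(μs)·( 2·g(s) + 4·A·r(s) ) ds = c·v²·Ω·( (γ/ω)·(2N+1)·(Ω² + μ²) + 2·c·v²·Ω ) / D(μ). (This is the linearized reduced spectrum Σ⁰₋(μ) in the regime of weak radiation-pressure interaction and flat phonon noise spectrum, with c = η|λ|² and N = N(ω).) -/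
/-!
Writing `2g + 4Ar = e^{-γs/2}(α cos ωs + β sin ωs)` and using the product-to-sum formulas, the
integral splits into Laplace transforms `∫₀^∞ e^{-ks} cos(bs) ds = k/(k²+b²)` and
`∫₀^∞ e^{-ks} sin(bs) ds = b/(k²+b²)` at `k = γ/2`, `b = μ ± ω`; these are the real and imaginary
parts of `∫₀^∞ e^{(-k+ib)s} ds = 1/(k - ib)`. Over the common denominator `D(μ)` the numerator only
involves `k² + ω² ± μ²`, and `γ²/4 + ω² = Ω²` turns it into the stated one.
-/
open Real MeasureTheory Set Filter

lemma complex_exp_damped_re (k b s : ℝ) :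
    (Complex.exp ((-k + b * Complex.I) * s)).re = exp (-k * s) * cos (b * s) := by
  simp [Complex.exp_re]

lemma complex_exp_damped_im (k b s : ℝ) :
    (Complex.exp ((-k + b * Complex.I) * s)).im = exp (-k * s) * sin (b * s) := by
  simp [Complex.exp_im]

section DampedLaplace

variable {k : ℝ} (hk : 0 < k)
include hk

lemma integrableOn_complex_exp_damped (b : ℝ) :
    IntegrableOn (fun s : ℝ => Complex.exp ((-k + b * Complex.I) * s)) (Ioi 0) :=
  integrableOn_exp_mul_complex_Ioi (by simpa using hk) 0

lemma integral_complex_exp_damped (b : ℝ) :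
    ∫ s in Ioi (0:ℝ), Complex.exp ((-k + b * Complex.I) * s)
      = (k + b * Complex.I) / ((k ^ 2 + b ^ 2 : ℝ) : ℂ) := by
  have hz : (-k + b * Complex.I) ≠ 0 := fun h => by
    simpa [hk.ne'] using congrArg Complex.re h
  have hd : ((k ^ 2 + b ^ 2 : ℝ) : ℂ) ≠ 0 := by exact_mod_cast (by positivity : k ^ 2 + b ^ 2 ≠ 0)
  rw [integral_exp_mul_complex_Ioi (by simpa using hk), Complex.ofReal_zero, mul_zero,
    Complex.exp_zero, div_eq_div_iff hz hd]
  push_cast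
  linear_combination -b ^ 2 * Complex.I_sq

lemma integrableOn_exp_neg_mul_cos (b : ℝ) :
    IntegrableOn (fun s => exp (-k * s) * cos (b * s)) (Ioi 0) := by
  simpa only [IntegrableOn, RCLike.re_to_complex, complex_exp_damped_re] using
    (integrableOn_complex_exp_damped hk b).re

lemma integrableOn_exp_neg_mul_sin (b : ℝ) :
    IntegrableOn (fun s => exp (-k * s) * sin (b * s)) (Ioi 0) := by
  simpa only [IntegrableOn, RCLike.im_to_complex, complex_exp_damped_im] using
    (integrableOn_complex_exp_damped hk b).im

lemma integral_exp_neg_mul_cos_Ioi (b : ℝ) :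
    ∫ s in Ioi (0:ℝ), exp (-k * s) * cos (b * s) = k / (k ^ 2 + b ^ 2) := by
  simpa only [RCLike.re_to_complex, complex_exp_damped_re, integral_complex_exp_damped hk,
    Complex.div_ofReal_re, Complex.add_re, Complex.ofReal_re, Complex.re_ofReal_mul, Complex.I_re,
    mul_zero, add_zero] using integral_re (integrableOn_complex_exp_damped hk b)

lemma integral_exp_neg_mul_sin_Ioi (b : ℝ) :
    ∫ s in Ioi (0:ℝ), exp (-k * s) * sin (b * s) = b / (k ^ 2 + b ^ 2) := by
  simpa only [RCLike.im_to_complex, complex_exp_damped_im, integral_complex_exp_damped hk,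
    Complex.div_ofReal_im, Complex.add_im, Complex.ofReal_im, Complex.im_ofReal_mul, Complex.I_im,
    mul_one, zero_add] using integral_im (integrableOn_complex_exp_damped hk b)

lemma integral_cos_mul_exp_neg_mul_cos_Ioi (μ ω : ℝ) :
    ∫ s in Ioi (0:ℝ), cos (μ * s) * (exp (-k * s) * cos (ω * s))
      = (k / (k ^ 2 + (μ + ω) ^ 2) + k / (k ^ 2 + (μ - ω) ^ 2)) / 2 := by
  have hsum : ∀ s, cos (μ * s) * (exp (-k * s) * cos (ω * s))
      = (exp (-k * s) * cos ((μ + ω) * s) + exp (-k * s) * cos ((μ - ω) * s)) / 2 := fun s => by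
    rw [add_mul, sub_mul, cos_add, cos_sub]; ring
  simp_rw [hsum]
  rw [integral_div, integral_add (integrableOn_exp_neg_mul_cos hk _)
    (integrableOn_exp_neg_mul_cos hk _), integral_exp_neg_mul_cos_Ioi hk,
    integral_exp_neg_mul_cos_Ioi hk]

lemma integral_cos_mul_exp_neg_mul_sin_Ioi (μ ω : ℝ) :
    ∫ s in Ioi (0:ℝ), cos (μ * s) * (exp (-k * s) * sin (ω * s))
      = ((ω + μ) / (k ^ 2 + (ω + μ) ^ 2) + (ω - μ) / (k ^ 2 + (ω - μ) ^ 2)) / 2 := by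
  have hsum : ∀ s, cos (μ * s) * (exp (-k * s) * sin (ω * s))
      = (exp (-k * s) * sin ((ω + μ) * s) + exp (-k * s) * sin ((ω - μ) * s)) / 2 := fun s => by
    rw [add_mul, sub_mul, sin_add, sin_sub]; ring
  simp_rw [hsum]
  rw [integral_div, integral_add (integrableOn_exp_neg_mul_sin hk _)
    (integrableOn_exp_neg_mul_sin hk _), integral_exp_neg_mul_sin_Ioi hk,
    integral_exp_neg_mul_sin_Ioi hk]

lemma integral_cos_mul_damped_oscillation_Ioi (μ ω α β : ℝ) :
    ∫ s in Ioi (0:ℝ), cos (μ * s) * (exp (-k * s) * (α * cos (ω * s) + β * sin (ω * s)))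
      = (α * k * (k ^ 2 + ω ^ 2 + μ ^ 2) + β * ω * (k ^ 2 + ω ^ 2 - μ ^ 2))
        / ((k ^ 2 + (μ + ω) ^ 2) * (k ^ 2 + (μ - ω) ^ 2)) := by
  have hcos_mul {f : ℝ → ℝ} (hf : IntegrableOn f (Ioi 0) volume) :
      IntegrableOn (fun s => cos (μ * s) * f s) (Ioi 0) :=
    hf.bdd_mul (c := 1) (by fun_prop) (ae_of_all _ fun s => by simpa using abs_cos_le_one _)
  have hsplit : ∀ s, cos (μ * s) * (exp (-k * s) * (α * cos (ω * s) + β * sin (ω * s)))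
      = α * (cos (μ * s) * (exp (-k * s) * cos (ω * s)))
        + β * (cos (μ * s) * (exp (-k * s) * sin (ω * s))) := fun s => by ring
  simp_rw [hsplit]
  rw [integral_add ((hcos_mul (integrableOn_exp_neg_mul_cos hk ω)).const_mul α)
      ((hcos_mul (integrableOn_exp_neg_mul_sin hk ω)).const_mul β),
    integral_const_mul, integral_const_mul, integral_cos_mul_exp_neg_mul_cos_Ioi hk,
    integral_cos_mul_exp_neg_mul_sin_Ioi hk]
  have hd₁ : k ^ 2 + (μ + ω) ^ 2 ≠ 0 := by positivity
  have hd₂ : k ^ 2 + (μ - ω) ^ 2 ≠ 0 := by positivity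
  rw [add_comm ω μ, ← neg_sq (ω - μ), neg_sub]
  field_simp
  ring

end DampedLaplace

theorem linearized_sigma_minus_zero_spectrum_general
    (γ Ω : ℝ) (hγ : 0 < γ) (hΩ : γ / 2 < Ω)
    (ω : ℝ) (hω : ω = Real.sqrt (Ω ^ 2 - γ ^ 2 / 4))
    (v c N : ℝ)
    (g r : ℝ → ℝ) (A : ℝ)
    (hg : ∀ s, g s = (v ^ 2 * Ω / (2 * ω)) * (2 * N + 1) * Real.exp (-γ * s / 2) * Real.cos (ω * s))
    (hr : ∀ s, r s = (1 / Ω) * Real.exp (-γ * s / 2) *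
      (ω * Real.cos (ω * s) + (γ / 2) * Real.sin (ω * s)))
    (hA : A = c * v ^ 4 * Ω / (4 * γ * ω))
    (D : ℝ → ℝ) (hD : ∀ x, D x = (γ ^ 2 / 4 + (x + ω) ^ 2) * (γ ^ 2 / 4 + (x - ω) ^ 2))
    (μ : ℝ) :
    2 * c * (∫ s in Set.Ioi (0:ℝ), Real.cos (μ * s) * (2 * g s + 4 * A * r s))
      = c * v ^ 2 * Ω * ((γ / ω) * (2 * N + 1) * (Ω ^ 2 + μ ^ 2) + 2 * c * v ^ 2 * Ω) / D μ := by
  have hsq : 0 < Ω ^ 2 - γ ^ 2 / 4 := by nlinarith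
  have hω_pos : 0 < ω := hω ▸ sqrt_pos.mpr hsq
  have hΩ_sq : (γ / 2) ^ 2 + ω ^ 2 = Ω ^ 2 := by rw [hω, sq_sqrt hsq.le]; ring
  have hΩ_pos : 0 < Ω := by linarith
  have hsplit : ∀ s, cos (μ * s) * (2 * g s + 4 * A * r s)
      = cos (μ * s) * (exp (-(γ / 2) * s) * ((v ^ 2 * Ω / ω * (2 * N + 1) + 4 * A * ω / Ω)
          * cos (ω * s) + 2 * A * γ / Ω * sin (ω * s))) := fun s => by
    rw [hg, hr, show -γ * s / 2 = -(γ / 2) * s by ring]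
    field_simp
    ring
  simp_rw [hsplit]
  rw [integral_cos_mul_damped_oscillation_Ioi (by positivity), hΩ_sq, hD, hA]
  field_simp
  ring

/-- Linearized phase-independent reduced spectrum `Σ⁰₋(μ)` in the flat-noise regime:
`2c∫₀^∞ cos(μs)(2g(s) + 4Ar(s)) ds = cv²Ω((γ/ω)(2N+1)(Ω² + μ²) + 2cv²Ω)/D(μ)`. -/
theorem linearized_sigma_minus_zero_spectrum
    (γ Ω : ℝ) (hγ : 0 < γ) (hΩ : γ / 2 < Ω)
    (ω : ℝ) (hω : ω = Real.sqrt (Ω ^ 2 - γ ^ 2 / 4))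
    (v c N : ℝ) (hc : 0 ≤ c) (hN : 0 ≤ N)
    (g r : ℝ → ℝ) (A : ℝ)
    (hg : ∀ s, g s = (v ^ 2 * Ω / (2 * ω)) * (2 * N + 1) * Real.exp (-γ * s / 2) * Real.cos (ω * s))
    (hr : ∀ s, r s = (1 / Ω) * Real.exp (-γ * s / 2) *
      (ω * Real.cos (ω * s) + (γ / 2) * Real.sin (ω * s)))
    (hA : A = c * v ^ 4 * Ω / (4 * γ * ω))
    (D : ℝ → ℝ) (hD : ∀ x, D x = (γ ^ 2 / 4 + (x + ω) ^ 2) * (γ ^ 2 / 4 + (x - ω) ^ 2))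
    (μ : ℝ) :
    2 * c * (∫ s in Set.Ioi (0:ℝ), Real.cos (μ * s) * (2 * g s + 4 * A * r s))
      = c * v ^ 2 * Ω * ((γ / ω) * (2 * N + 1) * (Ω ^ 2 + μ ^ 2) + 2 * c * v ^ 2 * Ω) / D μ :=
  linearized_sigma_minus_zero_spectrum_general γ Ω hγ hΩ ω hω v c N g r A hg hr hA D hD μ
end

section
/- Let γ, Ω be real with 0 < γ/2 < Ω, set ω := √(Ω² − γ²/4), let v ∈ ℝ, c ≥ 0, N ≥ 0, and define h(s) := (v²Ω/(2ω))·e^{−γs/2}·sin(ωs), g(s) := (v²Ω/(2ω))·(2N+1)·e^{−γs/2}·cos(ωs), r(s) := (1/Ω)·e^{−γs/2}·(ω·cos(ωs) + (γ/2)·sin(ωs)), A := c·v⁴·Ω/(4γω), and D(μ) := (γ²/4 + (μ+ω)²)·(γ²/4 + (μ−ω)²). Then for all α, μ ∈ ℝ, 2c·Re ∫₀^∞ e^{iμs}·( e^{−2iα}·(−g(s) + i·h(s) − 2·A·r(s)) + e^{2iα}·(−g(s) − i·h(s) − 2·A·r(s)) ) ds = (c·v²·Ω/D(μ))·( 2·(Ω²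 − μ²)·sin(2α) − ( 2·c·v²·Ω + (γ/ω)·(2N+1)·(Ω² + μ²) )·cos(2α) ). (This is the linearized phase-dependent reduced spectrum Σ^ψ₋(μ) in the regime of weak radiation-pressure interaction and flat phonon noise spectrum.) -/
/-!
Since `e^{∓2iα}` are conjugate, the bracket in the integrand is the real damped oscillation
`e^{-γs/2} (P cos ωs + Q sin ωs)` with `P = -2 cos 2α (G (2N+1) + 2Aω/Ω)` and
`Q = 2 sin 2α G - 2 cos 2α Aγ/Ω`, where `G = v²Ω/(2ω)`. Writing `z = iμ - γ/2`, the Laplace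
transforms of `cos` and `sin` give the integral `(-P z + Q ω) / (z² + ω²)`, and
`|z² + ω²|² = D(μ)` because `z² + ω² = (z + iω)(z - iω)`.
-/

open MeasureTheory Set Complex

lemma integral_exp_mul_Ioi_zero {z : ℂ} (hz : z.re < 0) :
    ∫ s : ℝ in Ioi 0, cexp (z * s) = -z⁻¹ := by
  rw [integral_exp_mul_complex_Ioi hz, ofReal_zero, mul_zero, exp_zero, neg_div, one_div]

lemma integrableOn_exp_mul_mul_ofReal_Ioi {z : ℂ} (hz : z.re < 0) {f : ℝ → ℝ}
    (hf : Continuous f) (hf_le : ∀ s, |f s| ≤ 1) :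
    IntegrableOn (fun s : ℝ => cexp (z * s) * f s) (Ioi 0) :=
  (integrableOn_exp_mul_complex_Ioi hz 0).mul_bdd (by fun_prop)
    (ae_of_all _ fun s => by simpa using hf_le s)

lemma integral_exp_mul_cos_Ioi {z : ℂ} (hz : z.re < 0) (ω : ℝ) :
    ∫ s : ℝ in Ioi 0, cexp (z * s) * Real.cos (ω * s) = -z / (z ^ 2 + ω ^ 2) := by
  have hp : (z + ω * I).re < 0 := by simpa using hz
  have hm : (z - ω * I).re < 0 := by simpa using hz
  have hp0 : z + ω * I ≠ 0 := fun h => by simp [h] at hp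
  have hm0 : z - ω * I ≠ 0 := fun h => by simp [h] at hm
  have hsplit : ∀ s : ℝ, cexp (z * s) * Real.cos (ω * s)
      = cexp ((z + ω * I) * s) / 2 + cexp ((z - ω * I) * s) / 2 := by
    intro s
    simp only [ofReal_cos, ofReal_mul, cos, add_mul, sub_mul, exp_add, exp_sub, neg_mul, exp_neg]
    ring_nf
  simp_rw [hsplit]
  rw [integral_add ((integrableOn_exp_mul_complex_Ioi hp 0).div_const 2)
      ((integrableOn_exp_mul_complex_Ioi hm 0).div_const 2),
    integral_div, integral_div, integral_exp_mul_Ioi_zero hp, integral_exp_mul_Ioi_zero hm,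
    show z ^ 2 + (ω : ℂ) ^ 2 = (z + ω * I) * (z - ω * I) by linear_combination (ω : ℂ) ^ 2 * I_sq]
  field_simp
  ring

lemma integral_exp_mul_sin_Ioi {z : ℂ} (hz : z.re < 0) (ω : ℝ) :
    ∫ s : ℝ in Ioi 0, cexp (z * s) * Real.sin (ω * s) = ω / (z ^ 2 + ω ^ 2) := by
  have hp : (z + ω * I).re < 0 := by simpa using hz
  have hm : (z - ω * I).re < 0 := by simpa using hz
  have hp0 : z + ω * I ≠ 0 := fun h => by simp [h] at hp
  have hm0 : z - ω * I ≠ 0 := fun h => by simp [h] at hm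
  have hsplit : ∀ s : ℝ, cexp (z * s) * Real.sin (ω * s)
      = (cexp ((z - ω * I) * s) - cexp ((z + ω * I) * s)) * I / 2 := by
    intro s
    simp only [ofReal_sin, ofReal_mul, sin, add_mul, sub_mul, exp_add, exp_sub, neg_mul, exp_neg]
    ring_nf
  simp_rw [hsplit]
  rw [integral_div, integral_mul_const, integral_sub (integrableOn_exp_mul_complex_Ioi hm 0)
      (integrableOn_exp_mul_complex_Ioi hp 0),
    integral_exp_mul_Ioi_zero hp, integral_exp_mul_Ioi_zero hm,
    show z ^ 2 + (ω : ℂ) ^ 2 = (z + ω * I) * (z - ω * I) by linear_combination (ω : ℂ) ^ 2 * I_sq]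
  field_simp
  linear_combination (-2 * ω) * I_sq

lemma re_integral_exp_mul_damped_oscillation_Ioi {γ : ℝ} (hγ : 0 < γ) (ω μ P Q : ℝ) :
    (∫ s in Ioi (0 : ℝ), cexp (I * μ * s) *
        ((Real.exp (-γ * s / 2) * (P * Real.cos (ω * s) + Q * Real.sin (ω * s)) : ℝ) : ℂ)).re
      = (P * (γ / 2) * (ω ^ 2 + γ ^ 2 / 4 + μ ^ 2) + Q * ω * (ω ^ 2 + γ ^ 2 / 4 - μ ^ 2))
          / ((γ ^ 2 / 4 + (μ + ω) ^ 2) * (γ ^ 2 / 4 + (μ - ω) ^ 2)) := by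
  set z : ℂ := I * μ - γ / 2 with hz_def
  have hz : z.re < 0 := by simpa [z] using hγ
  have hsplit : ∀ s : ℝ, cexp (I * μ * s) *
        ((Real.exp (-γ * s / 2) * (P * Real.cos (ω * s) + Q * Real.sin (ω * s)) : ℝ) : ℂ)
      = P * (cexp (z * s) * Real.cos (ω * s)) + Q * (cexp (z * s) * Real.sin (ω * s)) := by
    intro s
    have hexp : cexp (z * s) = cexp (I * μ * s) * Real.exp (-γ * s / 2) := by
      rw [ofReal_exp, ← exp_add, hz_def]; push_cast; ring_nf
    rw [hexp]
    push_cast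
    ring
  simp_rw [hsplit]
  have hcos := integrableOn_exp_mul_mul_ofReal_Ioi hz (f := fun s => Real.cos (ω * s))
    (by fun_prop) (fun s => Real.abs_cos_le_one _)
  have hsin := integrableOn_exp_mul_mul_ofReal_Ioi hz (f := fun s => Real.sin (ω * s))
    (by fun_prop) (fun s => Real.abs_sin_le_one _)
  rw [integral_add (hcos.const_mul _) (hsin.const_mul _), integral_const_mul,
    integral_const_mul, integral_exp_mul_cos_Ioi hz, integral_exp_mul_sin_Ioi hz]
  have hnormSq :
      normSq (z ^ 2 + ω ^ 2) = (γ ^ 2 / 4 + (μ + ω) ^ 2) * (γ ^ 2 / 4 + (μ - ω) ^ 2) := by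
    simp only [z, normSq_apply, pow_two, add_re, add_im, mul_re, mul_im, sub_re, sub_im, I_re, I_im, ofReal_re, ofReal_im,
      div_ofNat_re, div_ofNat_im]
    ring
  rw [← mul_div_assoc, ← mul_div_assoc, ← add_div, div_re, hnormSq, ← add_div]
  congr 1
  simp only [z, pow_two, neg_re, neg_im, add_re, add_im, mul_re, mul_im, sub_re, sub_im, I_re, I_im, ofReal_re, ofReal_im,
    div_ofNat_re, div_ofNat_im]
  ring

lemma exp_neg_two_mul_I_mul_add_exp_two_mul_I_mul (θ : ℝ) (X Y : ℂ) :
    cexp (-2 * I * θ) * (X + I * Y) + cexp (2 * I * θ) * (X - I * Y)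
      = 2 * (Real.cos (2 * θ) * X + Real.sin (2 * θ) * Y) := by
  have hpos : cexp (2 * I * θ) = Real.cos (2 * θ) + Real.sin (2 * θ) * I := by
    rw [show 2 * I * θ = ((2 * θ : ℝ) : ℂ) * I by push_cast; ring, exp_mul_I]
    push_cast
    ring
  have hneg : cexp (-2 * I * θ) = Real.cos (2 * θ) - Real.sin (2 * θ) * I := by
    rw [show -2 * I * θ = ((-(2 * θ) : ℝ) : ℂ) * I by push_cast; ring, exp_mul_I]
    push_cast
    rw [cos_neg, sin_neg]
    ring
  rw [hpos, hneg]
  linear_combination (-2 * Real.sin (2 * θ) * Y) * I_sq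

theorem linearized_sigma_minus_psi_spectrum_general
    (γ Ω : ℝ) (hγ : 0 < γ) (hΩ : γ / 2 < Ω)
    (ω : ℝ) (hω : ω = Real.sqrt (Ω ^ 2 - γ ^ 2 / 4))
    (v c N : ℝ)
    (h g r : ℝ → ℝ) (A : ℝ)
    (hh : ∀ s, h s = (v ^ 2 * Ω / (2 * ω)) * Real.exp (-γ * s / 2) * Real.sin (ω * s))
    (hg : ∀ s, g s = (v ^ 2 * Ω / (2 * ω)) * (2 * N + 1) * Real.exp (-γ * s / 2) * Real.cos (ω * s))
    (hr : ∀ s, r s = (1 / Ω) * Real.exp (-γ * s / 2) *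
      (ω * Real.cos (ω * s) + (γ / 2) * Real.sin (ω * s)))
    (hA : A = c * v ^ 4 * Ω / (4 * γ * ω))
    (D : ℝ → ℝ) (hD : ∀ x, D x = (γ ^ 2 / 4 + (x + ω) ^ 2) * (γ ^ 2 / 4 + (x - ω) ^ 2))
    (α μ : ℝ) :
    2 * c * (∫ s in Set.Ioi (0 : ℝ), Complex.exp (Complex.I * μ * s) *
          (Complex.exp (-2 * Complex.I * α) *
              (-(g s : ℂ) + Complex.I * (h s : ℂ) - 2 * (A : ℂ) * (r s : ℂ))
            + Complex.exp (2 * Complex.I * α) *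
              (-(g s : ℂ) - Complex.I * (h s : ℂ) - 2 * (A : ℂ) * (r s : ℂ)))).re
      = (c * v ^ 2 * Ω / D μ) *
          (2 * (Ω ^ 2 - μ ^ 2) * Real.sin (2 * α)
            - (2 * c * v ^ 2 * Ω + (γ / ω) * (2 * N + 1) * (Ω ^ 2 + μ ^ 2)) * Real.cos (2 * α)) := by
  have hΩ0 : 0 < Ω := by linarith
  have hω_sq : ω ^ 2 + γ ^ 2 / 4 = Ω ^ 2 := by
    rw [hω, Real.sq_sqrt (by nlinarith)]
    ring
  have hω0 : ω ≠ 0 := by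
    rw [hω]; exact (Real.sqrt_pos.mpr (by nlinarith)).ne'
  have hintegrand : ∀ s : ℝ, cexp (I * μ * s) *
        (cexp (-2 * I * α) * (-(g s : ℂ) + I * (h s : ℂ) - 2 * (A : ℂ) * (r s : ℂ))
          + cexp (2 * I * α) * (-(g s : ℂ) - I * (h s : ℂ) - 2 * (A : ℂ) * (r s : ℂ)))
      = cexp (I * μ * s) * ((Real.exp (-γ * s / 2) *
          ((-2 * Real.cos (2 * α) * (v ^ 2 * Ω / (2 * ω) * (2 * N + 1) + 2 * A * ω / Ω))
              * Real.cos (ω * s)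
            + (2 * Real.sin (2 * α) * (v ^ 2 * Ω / (2 * ω)) - 2 * Real.cos (2 * α) * A * γ / Ω)
              * Real.sin (ω * s)) : ℝ) : ℂ) := by
    intro s
    rw [add_sub_right_comm, sub_right_comm (-(g s : ℂ)),
      exp_neg_two_mul_I_mul_add_exp_two_mul_I_mul, hg, hh, hr]
    push_cast
    ring
  simp_rw [hintegrand]
  rw [re_integral_exp_mul_damped_oscillation_Ioi hγ, hω_sq, hD, hA]
  field_simp
  ring

/-- Linearized phase-dependent reduced spectrum `Σ^ψ₋(μ)` in the flat-noise regime: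
`2c Re ∫₀^∞ e^{iμs}(e^{−2iα}(−g + ih − 2Ar) + e^{2iα}(−g − ih − 2Ar)) ds
  = (cv²Ω/D(μ))(2(Ω² − μ²) sin 2α − (2cv²Ω + (γ/ω)(2N+1)(Ω² + μ²)) cos 2α)`. -/
theorem linearized_sigma_minus_psi_spectrum
    (γ Ω : ℝ) (hγ : 0 < γ) (hΩ : γ / 2 < Ω)
    (ω : ℝ) (hω : ω = Real.sqrt (Ω ^ 2 - γ ^ 2 / 4))
    (v c N : ℝ) (hc : 0 ≤ c) (hN : 0 ≤ N)
    (h g r : ℝ → ℝ) (A : ℝ)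
    (hh : ∀ s, h s = (v ^ 2 * Ω / (2 * ω)) * Real.exp (-γ * s / 2) * Real.sin (ω * s))
    (hg : ∀ s, g s = (v ^ 2 * Ω / (2 * ω)) * (2 * N + 1) * Real.exp (-γ * s / 2) * Real.cos (ω * s))
    (hr : ∀ s, r s = (1 / Ω) * Real.exp (-γ * s / 2) *
      (ω * Real.cos (ω * s) + (γ / 2) * Real.sin (ω * s)))
    (hA : A = c * v ^ 4 * Ω / (4 * γ * ω))
    (D : ℝ → ℝ) (hD : ∀ x, D x = (γ ^ 2 / 4 + (x + ω) ^ 2) * (γ ^ 2 / 4 + (x - ω) ^ 2))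
    (α μ : ℝ) :
    2 * c * (∫ s in Set.Ioi (0:ℝ), Complex.exp (Complex.I * μ * s) *
          (Complex.exp (-2 * Complex.I * α) *
              (-(g s : ℂ) + Complex.I * (h s : ℂ) - 2 * (A : ℂ) * (r s : ℂ))
            + Complex.exp (2 * Complex.I * α) *
              (-(g s : ℂ) - Complex.I * (h s : ℂ) - 2 * (A : ℂ) * (r s : ℂ)))).re
      = (c * v ^ 2 * Ω / D μ) *
          (2 * (Ω ^ 2 - μ ^ 2) * Real.sin (2 * α)
            - (2 * c * v ^ 2 * Ω + (γ / ω) * (2 * N + 1) * (Ω ^ 2 + μ ^ 2)) * Real.cos (2 * α)) :=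
  linearized_sigma_minus_psi_spectrum_general γ Ω hγ hΩ ω hω v c N h g r A hh hg hr hA D hD α μ
end

section
/- Let γ, Ω be real with 0 < γ/2 < Ω, set ω := √(Ω² − γ²/4), let v ∈ ℝ, c ≥ 0, N ≥ 0, and define h(s) := (v²Ω/(2ω))·e^{−γs/2}·sin(ωs), g(s) := (v²Ω/(2ω))·(2N+1)·e^{−γs/2}·cos(ωs), r(s) := (1/Ω)·e^{−γs/2}·(ω·cos(ωs) + (γ/2)·sin(ωs)), A := c·v⁴·Ω/(4γω), E(μ) := c·v²/Ω + (γ/(2ω))·(2N+1)·(1 + μ²/Ω²), and D(μ) := (γ²/4 + (μ+ω)²)·(γ²/4 + (μ−ω)²). Then for all α, μ ∈ ℝ, 2c·Re ∫₀^∞ e^{iμs}·( (g(s) + i·h(s) + 2·A·r(s)) + conj(g(s) + i·h(s) + 2·A·r(s)) + e^{−2iα}·(−g(s) + i·h(s) − 2·A·r(s)) + e^{2iα}·(−g(s) − i·h(s) − 2·A·r(s)) ) ds = (2·c·v²·Ω³/D(μ))·( (1 − μ²/Ω²)·sin(2α) + E(μ)·(1 − cos(2α)) ). (This is the linearized total squeezing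 spectrum Σ₋(μ) = Σ⁰₋(μ) + Σ^ψ₋(μ) of the light reflected by the oscillating mirror, in the regime of weak radiation-pressure interaction and strong laser.) -/
/-!
Inside the integral the quadrature combination collapses to `e^{iμs}` times the real function
`2(1 - cos 2α)(g + 2Ar) + 2 sin 2α · h`, a damped oscillation `e^{-γs/2}(p cos ωs + q sin ωs)`.
Writing it as `Re (u e^{zs})` with `z = -γ/2 + iω`, its one-sided Fourier transform is a sum of two
simple poles at `μ = ∓ω`, whose real parts give the two Lorentzian factors of `D(μ)`; the rest is
algebra using `(γ/2)² + ω² = Ω²`.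
-/

open MeasureTheory Set Complex ComplexConjugate

theorem integral_Ioi_cexp_mul_re_mul_cexp {z : ℂ} (hz : z.re < 0) (μ : ℝ) (u : ℂ) :
    ∫ s in Ioi (0 : ℝ), cexp (I * μ * s) * ((u * cexp (z * s)).re : ℂ)
      = -(u / (I * μ + z) + conj u / (I * μ + conj z)) / 2 := by
  have hz₁ : (I * μ + z).re < 0 := by simpa using hz
  have hz₂ : (I * μ + conj z).re < 0 := by simpa using hz
  have hsplit : ∀ s : ℝ, cexp (I * μ * s) * ((u * cexp (z * s)).re : ℂ)
      = u / 2 * cexp ((I * μ + z) * s) + conj u / 2 * cexp ((I * μ + conj z) * s) := by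
    intro s
    rw [re_eq_add_conj, map_mul, ← exp_conj, map_mul, conj_ofReal, add_mul, add_mul, exp_add,
      exp_add]
    ring
  simp_rw [hsplit]
  rw [integral_add ((integrableOn_exp_mul_complex_Ioi hz₁ 0).const_mul _)
      ((integrableOn_exp_mul_complex_Ioi hz₂ 0).const_mul _), integral_const_mul,
    integral_const_mul, integral_exp_mul_complex_Ioi hz₁, integral_exp_mul_complex_Ioi hz₂]
  simp only [ofReal_zero, mul_zero, exp_zero]
  ring

theorem damped_oscillation_eq_re (κ ω p q s : ℝ) :
    Real.exp (-κ * s) * (p * Real.cos (ω * s) + q * Real.sin (ω * s))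
      = ((p - q * I) * cexp ((-κ + ω * I) * s)).re := by
  rw [show (-κ + ω * I) * s = ((-κ * s : ℝ) : ℂ) + ((ω * s : ℝ) : ℂ) * I by push_cast; ring,
    exp_add, ← ofReal_exp, exp_mul_I, ← ofReal_cos, ← ofReal_sin]
  simp only [mul_re, mul_im, sub_re, sub_im, add_re, add_im, ofReal_re, ofReal_im, I_re, I_im]
  ring

theorem re_integral_Ioi_cexp_mul_damped_oscillation {κ : ℝ} (hκ : 0 < κ) (ω μ p q : ℝ) :
    (∫ s in Ioi (0 : ℝ), cexp (I * μ * s) *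
        ((Real.exp (-κ * s) * (p * Real.cos (ω * s) + q * Real.sin (ω * s)) : ℝ) : ℂ)).re
      = (p * κ * (κ ^ 2 + ω ^ 2 + μ ^ 2) + q * ω * (κ ^ 2 + ω ^ 2 - μ ^ 2))
          / ((κ ^ 2 + (μ + ω) ^ 2) * (κ ^ 2 + (μ - ω) ^ 2)) := by
  have hre : ∀ x y a : ℝ,
      ((x + y * I) / (-κ + a * I)).re = (y * a - x * κ) / (κ ^ 2 + a ^ 2) := by
    intro x y a
    simp only [div_re, normSq_apply, add_re, add_im, mul_re, mul_im, ofReal_re, ofReal_im, I_re,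
      I_im, neg_re, neg_im]
    ring
  simp_rw [damped_oscillation_eq_re]
  rw [integral_Ioi_cexp_mul_re_mul_cexp (by simpa using hκ),
    show (p : ℂ) - q * I = p + (-q : ℝ) * I by push_cast; ring,
    show conj ((p : ℂ) + (-q : ℝ) * I) = p + q * I by simp,
    show I * μ + (-κ + ω * I) = -κ + (μ + ω : ℝ) * I by push_cast; ring,
    show I * μ + conj (-κ + ω * I) = -κ + (μ - ω : ℝ) * I by simp; ring]
  simp only [div_ofNat_re, neg_re, add_re, hre]
  have h₁ : κ ^ 2 + (μ + ω) ^ 2 ≠ 0 := by positivity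
  have h₂ : κ ^ 2 + (μ - ω) ^ 2 ≠ 0 := by positivity
  field_simp
  ring

theorem add_conj_add_cexp_two_mul_I_mul (x y α : ℝ) :
    ((x : ℂ) + I * y) + conj ((x : ℂ) + I * y) + cexp (-2 * I * α) * (-(x : ℂ) + I * y)
        + cexp (2 * I * α) * (-(x : ℂ) - I * y)
      = ((2 * (1 - Real.cos (2 * α)) * x + 2 * Real.sin (2 * α) * y : ℝ) : ℂ) := by
  have hexp : ∀ θ : ℝ, cexp (θ * I) = Real.cos θ + Real.sin θ * I := fun θ => by
    rw [exp_mul_I, ← ofReal_cos, ← ofReal_sin]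
  rw [show -2 * I * α = ((-(2 * α) : ℝ) : ℂ) * I by push_cast; ring,
    show 2 * I * α = ((2 * α : ℝ) : ℂ) * I by push_cast; ring, hexp, hexp, Real.cos_neg,
    Real.sin_neg, map_add, map_mul, conj_ofReal, conj_ofReal, conj_I]
  simp only [ofReal_add, ofReal_mul, ofReal_sub, ofReal_neg, ofReal_ofNat, ofReal_one]
  linear_combination (-2 * Real.sin (2 * α) * y : ℂ) * I_sq

theorem linearized_total_squeezing_spectrum_general
    (γ Ω : ℝ) (hγ : 0 < γ) (hΩ : γ / 2 < Ω)
    (ω : ℝ) (hω : ω = Real.sqrt (Ω ^ 2 - γ ^ 2 / 4))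
    (v c N : ℝ)
    (h g r : ℝ → ℝ) (A : ℝ)
    (hh : ∀ s, h s = (v ^ 2 * Ω / (2 * ω)) * Real.exp (-γ * s / 2) * Real.sin (ω * s))
    (hg : ∀ s, g s = (v ^ 2 * Ω / (2 * ω)) * (2 * N + 1) * Real.exp (-γ * s / 2) * Real.cos (ω * s))
    (hr : ∀ s, r s = (1 / Ω) * Real.exp (-γ * s / 2) *
      (ω * Real.cos (ω * s) + (γ / 2) * Real.sin (ω * s)))
    (hA : A = c * v ^ 4 * Ω / (4 * γ * ω))
    (E : ℝ → ℝ)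
    (hE : ∀ x, E x = c * v ^ 2 / Ω + (γ / (2 * ω)) * (2 * N + 1) * (1 + x ^ 2 / Ω ^ 2))
    (D : ℝ → ℝ) (hD : ∀ x, D x = (γ ^ 2 / 4 + (x + ω) ^ 2) * (γ ^ 2 / 4 + (x - ω) ^ 2))
    (α μ : ℝ) :
    2 * c * (∫ s in Set.Ioi (0:ℝ), Complex.exp (Complex.I * μ * s) *
          (((g s : ℂ) + Complex.I * (h s : ℂ) + 2 * (A : ℂ) * (r s : ℂ))
            + (starRingEnd ℂ) ((g s : ℂ) + Complex.I * (h s : ℂ) + 2 * (A : ℂ) * (r s : ℂ))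
            + Complex.exp (-2 * Complex.I * α) *
                (-(g s : ℂ) + Complex.I * (h s : ℂ) - 2 * (A : ℂ) * (r s : ℂ))
            + Complex.exp (2 * Complex.I * α) *
                (-(g s : ℂ) - Complex.I * (h s : ℂ) - 2 * (A : ℂ) * (r s : ℂ)))).re
      = (2 * c * v ^ 2 * Ω ^ 3 / D μ) *
          ((1 - μ ^ 2 / Ω ^ 2) * Real.sin (2 * α) + E μ * (1 - Real.cos (2 * α))) := by
  have hΩ₀ : 0 < Ω := by linarith
  have hω₀ : 0 < ω := hω ▸ Real.sqrt_pos.mpr (by nlinarith)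
  have hΩω : (γ / 2) ^ 2 + ω ^ 2 = Ω ^ 2 := by
    rw [hω, Real.sq_sqrt (by nlinarith)]; ring
  set C := Real.cos (2 * α)
  set S := Real.sin (2 * α)
  have hquad : ∀ s : ℝ,
      ((g s : ℂ) + I * (h s : ℂ) + 2 * (A : ℂ) * (r s : ℂ))
          + conj ((g s : ℂ) + I * (h s : ℂ) + 2 * (A : ℂ) * (r s : ℂ))
          + cexp (-2 * I * α) * (-(g s : ℂ) + I * (h s : ℂ) - 2 * (A : ℂ) * (r s : ℂ))
          + cexp (2 * I * α) * (-(g s : ℂ) - I * (h s : ℂ) - 2 * (A : ℂ) * (r s : ℂ))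
        = ((2 * (1 - C) * (g s + 2 * A * r s) + 2 * S * h s : ℝ) : ℂ) := fun s => by
    rw [← add_conj_add_cexp_two_mul_I_mul]
    push_cast
    ring_nf
  have hdamped : ∀ s : ℝ, 2 * (1 - C) * (g s + 2 * A * r s) + 2 * S * h s
      = Real.exp (-(γ / 2) * s) *
          ((1 - C) * (v ^ 2 * Ω * (2 * N + 1) / ω + c * v ^ 4 / γ) * Real.cos (ω * s)
            + ((1 - C) * c * v ^ 4 / (2 * ω) + S * v ^ 2 * Ω / ω) * Real.sin (ω * s)) := fun s => by
    rw [hg, hh, hr, hA, show -(γ / 2) * s = -γ * s / 2 by ring]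
    field_simp
    ring
  simp_rw [hquad, hdamped]
  rw [re_integral_Ioi_cexp_mul_damped_oscillation (half_pos hγ), hΩω, hD, hE]
  field_simp
  ring

/-- Linearized total squeezing spectrum `Σ₋(μ) = Σ⁰₋(μ) + Σ^ψ₋(μ)`:
`2c Re ∫₀^∞ e^{iμs}((g+ih+2Ar) + conj(g+ih+2Ar) + e^{−2iα}(−g+ih−2Ar) + e^{2iα}(−g−ih−2Ar)) ds
  = (2cv²Ω³/D(μ))((1 − μ²/Ω²) sin 2α + E(μ)(1 − cos 2α))`. -/
theorem linearized_total_squeezing_spectrum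
    (γ Ω : ℝ) (hγ : 0 < γ) (hΩ : γ / 2 < Ω)
    (ω : ℝ) (hω : ω = Real.sqrt (Ω ^ 2 - γ ^ 2 / 4))
    (v c N : ℝ) (hc : 0 ≤ c) (hN : 0 ≤ N)
    (h g r : ℝ → ℝ) (A : ℝ)
    (hh : ∀ s, h s = (v ^ 2 * Ω / (2 * ω)) * Real.exp (-γ * s / 2) * Real.sin (ω * s))
    (hg : ∀ s, g s = (v ^ 2 * Ω / (2 * ω)) * (2 * N + 1) * Real.exp (-γ * s / 2) * Real.cos (ω * s))
    (hr : ∀ s, r s = (1 / Ω) * Real.exp (-γ * s / 2) *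
      (ω * Real.cos (ω * s) + (γ / 2) * Real.sin (ω * s)))
    (hA : A = c * v ^ 4 * Ω / (4 * γ * ω))
    (E : ℝ → ℝ)
    (hE : ∀ x, E x = c * v ^ 2 / Ω + (γ / (2 * ω)) * (2 * N + 1) * (1 + x ^ 2 / Ω ^ 2))
    (D : ℝ → ℝ) (hD : ∀ x, D x = (γ ^ 2 / 4 + (x + ω) ^ 2) * (γ ^ 2 / 4 + (x - ω) ^ 2))
    (α μ : ℝ) :
    2 * c * (∫ s in Set.Ioi (0:ℝ), Complex.exp (Complex.I * μ * s) *
          (((g s : ℂ) + Complex.I * (h s : ℂ) + 2 * (A : ℂ) * (r s : ℂ))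
            + (starRingEnd ℂ) ((g s : ℂ) + Complex.I * (h s : ℂ) + 2 * (A : ℂ) * (r s : ℂ))
            + Complex.exp (-2 * Complex.I * α) *
                (-(g s : ℂ) + Complex.I * (h s : ℂ) - 2 * (A : ℂ) * (r s : ℂ))
            + Complex.exp (2 * Complex.I * α) *
                (-(g s : ℂ) - Complex.I * (h s : ℂ) - 2 * (A : ℂ) * (r s : ℂ)))).re
      = (2 * c * v ^ 2 * Ω ^ 3 / D μ) *
          ((1 - μ ^ 2 / Ω ^ 2) * Real.sin (2 * α) + E μ * (1 - Real.cos (2 * α))) :=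
  linearized_total_squeezing_spectrum_general γ Ω hγ hΩ ω hω v c N h g r A hh hg hr hA E hE D hD α μ
end

section
/- Let γ, Ω be real with 0 < γ/2 < Ω, set ω := √(Ω² − γ²/4), let v ∈ ℝ with v ≠ 0, let c > 0, N ≥ 0, and let μ ∈ ℝ with μ² ≠ Ω². Define E(μ) := c·v²/Ω + (γ/(2ω))·(2N+1)·(1 + μ²/Ω²), D(μ) := (γ²/4 + (μ+ω)²)·(γ²/4 + (μ−ω)²), P := 1 − μ²/Ω², and the minimal quadrature variance Δ²₋(μ) := 1 + (2·c·v²·Ω³/D(μ))·( E(μ) − √(P² + E(μ)²) ). Then Δ²₋(μ) < 1, i.e. in the weak-interaction regime the scattered light is squeezed at every frequency μ with μ² ≠ Ω², for every admissible choice of the parameters. -/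
/-! The bracket `E - √(P² + E²)` is strictly negative as soon as `P ≠ 0`, and `P = 1 - μ²/Ω²`
vanishes only at `μ² = Ω²`; the prefactor `2 c v² Ω³ / D` is positive since `D` is
a product of two sums `γ²/4 + x²`. -/

theorem Real.lt_sqrt_sq_add_sq {p x : ℝ} (hp : p ≠ 0) : x < √(p ^ 2 + x ^ 2) :=
  calc x ≤ |x| := le_abs_self x
    _ = √(x ^ 2) := (Real.sqrt_sq_eq_abs x).symm
    _ < √(p ^ 2 + x ^ 2) :=
      Real.sqrt_lt_sqrt (sq_nonneg x) (lt_add_of_pos_left _ (sq_pos_of_ne_zero hp))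

theorem one_sub_sq_div_sq_ne_zero {μ Ω : ℝ} (hΩ : Ω ≠ 0) (hμ : μ ^ 2 ≠ Ω ^ 2) :
    1 - μ ^ 2 / Ω ^ 2 ≠ 0 :=
  sub_ne_zero.mpr fun h => hμ ((div_eq_one_iff_eq (pow_ne_zero 2 hΩ)).mp h.symm)

theorem squeezing_at_every_frequency_general
    (γ Ω : ℝ) (hγ : 0 < γ) (hΩ : γ / 2 < Ω)
    (ω : ℝ)
    (v c μ : ℝ) (hv : v ≠ 0) (hc : 0 < c) (hμ : μ ^ 2 ≠ Ω ^ 2)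
    (E D P Δm : ℝ)
    (hD : D = (γ ^ 2 / 4 + (μ + ω) ^ 2) * (γ ^ 2 / 4 + (μ - ω) ^ 2))
    (hP : P = 1 - μ ^ 2 / Ω ^ 2)
    (hΔm : Δm = 1 + (2 * c * v ^ 2 * Ω ^ 3 / D) * (E - Real.sqrt (P ^ 2 + E ^ 2))) :
    Δm < 1 := by
  have hΩ0 : 0 < Ω := (half_pos hγ).trans hΩ
  have hD0 : 0 < D := by rw [hD]; positivity
  have hprefactor : 0 < 2 * c * v ^ 2 * Ω ^ 3 / D := by positivity
  have hbracket : E - √(P ^ 2 + E ^ 2) < 0 :=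
    sub_neg.mpr (Real.lt_sqrt_sq_add_sq (hP ▸ one_sub_sq_div_sq_ne_zero hΩ0.ne' hμ))
  rw [hΔm]
  linarith [mul_neg_of_pos_of_neg hprefactor hbracket]

/-- In the weak-interaction regime the scattered light is squeezed at every frequency
`μ` with `μ² ≠ Ω²`: the minimal quadrature variance `Δ²₋(μ)` is strictly below the
coherent/vacuum level `1`, for every admissible choice of the parameters. -/
theorem squeezing_at_every_frequency
    (γ Ω : ℝ) (hγ : 0 < γ) (hΩ : γ / 2 < Ω)
    (ω : ℝ) (hω : ω = Real.sqrt (Ω ^ 2 - γ ^ 2 / 4))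
    (v c N μ : ℝ) (hv : v ≠ 0) (hc : 0 < c) (hN : 0 ≤ N) (hμ : μ ^ 2 ≠ Ω ^ 2)
    (E D P Δm : ℝ)
    (hE : E = c * v ^ 2 / Ω + (γ / (2 * ω)) * (2 * N + 1) * (1 + μ ^ 2 / Ω ^ 2))
    (hD : D = (γ ^ 2 / 4 + (μ + ω) ^ 2) * (γ ^ 2 / 4 + (μ - ω) ^ 2))
    (hP : P = 1 - μ ^ 2 / Ω ^ 2)
    (hΔm : Δm = 1 + (2 * c * v ^ 2 * Ω ^ 3 / D) * (E - Real.sqrt (P ^ 2 + E ^ 2))) :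
    Δm < 1 :=
  squeezing_at_every_frequency_general γ Ω hγ hΩ ω v c μ hv hc hμ E D P Δm hD hP hΔm
end

section
/- Let γ > 0 and ω ∈ ℝ with ω ≠ 0, and let z ∈ ℂ. Suppose that Re( z / ( (γ/2 + i(ω + ν))·(γ/2 + i(ω − ν)) ) ) = 0 for every ν ∈ ℝ. Then z = 0. (This is the key step in the proof that the energy-equipartition requirement, imposed for every noise spectral density N(ν), forces the system operator in the Hudson–Parthasarathy equation to be R = √γ·a_m.) -/
/-! The denominator is `c + ν²` with `c = (γ/2 + iω)²`, whose imaginary part `γω` is nonzero.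
Clearing the positive factor `|c + ν²|²`, the hypothesis becomes
`Re z · (Re c + ν²) + Im z · Im c = 0` for all `ν`; comparing `ν = 0` with `ν = 1` gives
`Re z = 0`, and then `Im c ≠ 0` gives `Im z = 0`. -/

namespace Complex

theorem re_div_eq_zero_iff {z w : ℂ} (hw : w ≠ 0) :
    (z / w).re = 0 ↔ z.re * w.re + z.im * w.im = 0 := by
  rw [div_re, ← add_div, div_eq_zero_iff, normSq_eq_zero, or_iff_left hw]

theorem eq_zero_of_forall_re_div_add_sq_eq_zero {z c : ℂ} (hc : c.im ≠ 0)
    (h : ∀ ν : ℝ, (z / (c + (ν : ℂ) ^ 2)).re = 0) : z = 0 := by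
  have hline : ∀ ν : ℝ, z.re * (c.re + ν ^ 2) + z.im * c.im = 0 := fun ν => by
    have hne : c + (ν : ℂ) ^ 2 ≠ 0 := fun h0 => hc (by simpa [← ofReal_pow] using congrArg im h0)
    simpa [← ofReal_pow] using (re_div_eq_zero_iff hne).mp (h ν)
  have hre : z.re = 0 := by linarith [hline 0, hline 1]
  have him : z.im = 0 := by
    simpa [hre, hc] using hline 0
  exact ext hre him

theorem add_I_mul_mul_sub_I_mul (a ν : ℂ) : (a + I * ν) * (a - I * ν) = a ^ 2 + ν ^ 2 := by
  linear_combination (-ν ^ 2) * I_sq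

end Complex

/-- If `Re(z/((γ/2 + i(ω+ν))(γ/2 + i(ω−ν)))) = 0` for every real `ν`, then `z = 0`.
This forces the system operator in the Hudson–Parthasarathy equation to be `R = √γ·a_m`
when energy equipartition is demanded for every noise spectral density. -/
theorem equipartition_forces_vanishing
    (γ ω : ℝ) (hγ : 0 < γ) (hω : ω ≠ 0) (z : ℂ)
    (h : ∀ ν : ℝ,
      (z / (((γ : ℂ) / 2 + Complex.I * ((ω : ℂ) + (ν : ℂ))) *
        ((γ : ℂ) / 2 + Complex.I * ((ω : ℂ) - (ν : ℂ))))).re = 0) :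
    z = 0 := by
  have hc : (((γ : ℂ) / 2 + Complex.I * ω) ^ 2).im ≠ 0 := by
    have him : (((γ : ℂ) / 2 + Complex.I * ω) ^ 2).im = γ * ω := by
      simp only [sq, Complex.mul_im, Complex.mul_re, Complex.add_re, Complex.add_im,
        Complex.div_ofNat_re, Complex.div_ofNat_im, Complex.ofReal_re, Complex.ofReal_im,
        Complex.I_re, Complex.I_im]
      ring
    rw [him]
    exact mul_ne_zero hγ.ne' hω
  refine Complex.eq_zero_of_forall_re_div_add_sq_eq_zero hc fun ν => ?_
  rw [← Complex.add_I_mul_mul_sub_I_mul]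
  convert h ν using 4 <;> ring
end
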